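/- arXiv:1503.00120 — 2 statements merged into one kernel-verified Lean document; each statement's English description precedes it below -/
import Mathlib

section
/- Let f : ℝ → ℝ be defined by f(t) = a·e^{bt} + (c·n)/(4·a·c̄·(n-1))·e^{-bt} with a > 0, c̄ > 0, c > 0, n ≥ 2 an integer, and b = √(c̄/n). Then f is positive everywhere and satisfies the two Einstein equations f''/f = c̄/n and c̄(n-1)/n = (c + (n-1)(f')²)/f². -/
/-!
Every `f = A e^{bt} + B e^{-bt}` satisfies `f'' = b² f` and, since `e^{bt} e^{-bt} = 1`,
`f'² = b² (f² - 4AB)`. With `b² = c̄/n` the first identity is the first Einstein equation, and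
the coefficient `B = c n / (4 a c̄ (n - 1))` is exactly the one making `4AB b² (n - 1) = c`, which
turns the second identity into the second equation.
-/

open Real

section ExpCombination

variable (A B b : ℝ)

theorem hasDerivAt_exp_combination (t : ℝ) :
    HasDerivAt (fun t => A * exp (b * t) + B * exp (-b * t))
      (b * (A * exp (b * t) - B * exp (-b * t))) t := by
  have hplus : HasDerivAt (fun t => b * t) b t := by
    simpa using (hasDerivAt_id t).const_mul b
  have hminus : HasDerivAt (fun t => -b * t) (-b) t := by
    simpa using (hasDerivAt_id t).const_mul (-b)
  exact ((hplus.exp.const_mul A).add (hminus.exp.const_mul B)).congr_deriv (by ring)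

theorem deriv_exp_combination :
    deriv (fun t => A * exp (b * t) + B * exp (-b * t)) =
      fun t => b * (A * exp (b * t) - B * exp (-b * t)) :=
  funext fun t => (hasDerivAt_exp_combination A B b t).deriv

theorem deriv_deriv_exp_combination :
    deriv (deriv (fun t => A * exp (b * t) + B * exp (-b * t))) =
      fun t => b ^ 2 * (A * exp (b * t) + B * exp (-b * t)) := by
  rw [deriv_exp_combination]
  funext t
  convert ((hasDerivAt_exp_combination A (-B) b t).const_mul b).deriv using 1
  · simp only [neg_mul, sub_eq_add_neg]
  · ring

theorem exp_combination_sub_sq (t : ℝ) :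
    (A * exp (b * t) - B * exp (-b * t)) ^ 2 =
      (A * exp (b * t) + B * exp (-b * t)) ^ 2 - 4 * A * B := by
  have hprod : exp (b * t) * exp (-b * t) = 1 := by
    rw [← exp_add, neg_mul, add_neg_cancel, exp_zero]
  linear_combination (-4 * A * B) * hprod

end ExpCombination

/-- Case 1 of the classification of Einstein GRW warping functions:
`f(t) = a·e^{bt} + (c·n)/(4·a·c̄·(n-1))·e^{-bt}` with `a > 0`, `c̄ > 0`, `c > 0`,
`n ≥ 2`, `b = √(c̄/n)` is positive and satisfies the two Einstein equations. -/
theorem stmt_0 (n : ℕ) (hn : 2 ≤ n) (a cbar c : ℝ) (ha : 0 < a) (hcbar : 0 < cbar)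
    (hc : 0 < c) (b : ℝ) (hb : b = Real.sqrt (cbar / n))
    (f : ℝ → ℝ)
    (hf : f = fun t => a * Real.exp (b * t) +
      (c * n) / (4 * a * cbar * (n - 1)) * Real.exp (-b * t)) :
    (∀ t, 0 < f t) ∧
    (∀ t, deriv (deriv f) t / f t = cbar / n) ∧
    (∀ t, cbar * (n - 1) / n = (c + (n - 1) * (deriv f t) ^ 2) / (f t) ^ 2) := by
  have hn1 : (0 : ℝ) < n - 1 := by
    have : (2 : ℝ) ≤ n := by exact_mod_cast hn
    linarith
  have hb2 : b ^ 2 = cbar / n := by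
    rw [hb, sq_sqrt (by positivity)]
  have hpos : ∀ t, 0 < f t := fun t => by subst hf; positivity
  refine ⟨hpos, fun t => ?_, fun t => ?_⟩
  · have hsecond : deriv (deriv f) t = b ^ 2 * f t := by
      rw [hf, deriv_deriv_exp_combination]
    rw [hsecond, mul_div_cancel_right₀ _ (hpos t).ne', hb2]
  · have hsq : deriv f t ^ 2 =
        b ^ 2 * (f t ^ 2 - 4 * a * (c * n / (4 * a * cbar * (n - 1)))) := by
      rw [hf, deriv_exp_combination, mul_pow, exp_combination_sub_sq]
    have hft := (hpos t).ne'
    rw [hsq, hb2]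
    field_simp
    ring
end

section
/- Let n ≥ 2, f : I → (0,∞) smooth, and suppose Z = (z₀, Z^F) is a timelike tangent vector to the GRW spacetime I ×_f F at a point (t,p), i.e., ḡ(Z,Z) = −z₀² + f(t)²·g_F(Z^F,Z^F) < 0. If the fiber satisfies Ric^F(Z^F,Z^F) ≥ (n-1)·f(t)²·(log f)''(t)·g_F(Z^F,Z^F) (NCC) and the fiber scalar curvature satisfies S^F(p) + n(n-1)·f'(t)² ≥ 0, then the Einstein tensor satisfies G(Z,Z) = Ric^F(Z^F,Z^F) − (n-1)f²(log f)''·g_F(Z^F,Z^F) − (S^F/(2f²))·ḡ(Z,Z) − (n(n-1)/2)·(f'²/f²)·ḡ(Z,Z) ≥ 0. -/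
/-- Weak energy condition from the NCC in a GRW spacetime: at a point `(t,p)`,
for a timelike vector `Z = (z₀, Z^F)` (so `ḡ(Z,Z) = −z₀² + f(t)²·q < 0`, where
`q = g_F(Z^F,Z^F) ≥ 0`), if `Ric^F(Z^F,Z^F) ≥ (n-1)·f(t)²·(log f)''(t)·q`
(NCC) and `S^F(p) + n(n-1)·f'(t)² ≥ 0`, then the Einstein tensor satisfies
`G(Z,Z) ≥ 0`. -/
theorem stmt_17 (n : ℕ) (hn : 2 ≤ n)
    (ft f' logf'' z₀ q RicF SF : ℝ) (hft : 0 < ft) (hq : 0 ≤ q)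
    (gZZ : ℝ) (hgZZ : gZZ = -z₀ ^ 2 + ft ^ 2 * q) (htimelike : gZZ < 0)
    (hNCC : (n - 1 : ℝ) * ft ^ 2 * logf'' * q ≤ RicF)
    (hSF : 0 ≤ SF + n * (n - 1) * f' ^ 2) :
    0 ≤ RicF - (n - 1 : ℝ) * ft ^ 2 * logf'' * q
      - SF / (2 * ft ^ 2) * gZZ - n * (n - 1) / 2 * (f' ^ 2 / ft ^ 2) * gZZ := by
  have h2 : (0:ℝ) < ft ^ 2 := by positivity
  have key : 0 ≤ (SF + n * (n - 1) * f' ^ 2) * (-gZZ) / (2 * ft ^ 2) :=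
    div_nonneg (mul_nonneg hSF (by linarith)) (by positivity)
  have heq : (SF + n * (n - 1) * f' ^ 2) * (-gZZ) / (2 * ft ^ 2)
      = - (SF / (2 * ft ^ 2) * gZZ) - n * (n - 1) / 2 * (f' ^ 2 / ft ^ 2) * gZZ := by
    field_simp
    ring
  linarith [heq ▸ key]
end
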